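/- Let (Ω, 𝓕, P) be a probability space, C ⊆ L^∞ a convex cone with −L^∞₊ ⊆ C, and Φ : (0,∞) → ℝ convex satisfying the growth condition G(Φ) with Φ(0) < +∞. Assume M_Φ ∩ ℙ ≠ ∅ and let f be a random variable with f ∈ L¹(Q) for every Q ∈ M_Φ. Then the weak super replication price of f satisfies inf{x ∈ ℝ : f − x ∈ C_Φ} = sup{E_Q[f] : Q ∈ M_Φ} (equality in ℝ ∪ {+∞}). -/

import Mathlib

/-!
The inequality `sup ≤ inf` holds because every `g ∈ C` has nonpositive `Q`-expectation. For the
converse, let `x` exceed every `E_Q[f]`, `Q ∈ M_Φ`, and suppose `f - x` is at `L¹(Q)`-distance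
`ε > 0` from `C` for some `Q ∈ M_Φ`. Hahn–Banach in `L¹(Q)` gives a functional that is
nonpositive on `C` and positive at `f - x`; it is integration against a bounded `h`, and `h ≥ 0`
because `-1_A ∈ C`. The measure `Q'` with `dQ'/dQ = h / E_Q[h]` is then separating, and its
density with respect to `P` is a bounded multiple of `dQ/dP`, so convexity of `Φ` and the growth
condition keep its `Φ`-entropy finite. Thus `Q' ∈ M_Φ`, yet `E_Q'[f] > x`.
-/

open MeasureTheory Filter

variable {Ω : Type*} [MeasurableSpace Ω]

/-- The set `M₁` of separating measures for the convex cone `C ⊆ L^∞` of bounded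
super-replicable claims: probability measures `Q ≪ P` with `E_Q[g] ≤ 0` for all `g ∈ C`. -/
def sepMeasures (P : Measure Ω) (C : Set (Ω → ℝ)) : Set (Measure Ω) :=
  {Q | IsProbabilityMeasure Q ∧ Q ≪ P ∧ ∀ g ∈ C, ∫ ω, g ω ∂Q ≤ 0}

/-- The set `M_Φ` of separating measures with finite generalized entropy
`E_P[Φ(dQ/dP)] < ∞` (here `Φ(0) < +∞`, `Φ 0` being the limit of `Φ` at `0⁺`, so that
finiteness of the generalized entropy is plain integrability of `Φ(dQ/dP)`). -/
def MPhi (P : Measure Ω) (C : Set (Ω → ℝ)) (Φ : ℝ → ℝ) : Set (Measure Ω) :=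
  {Q ∈ sepMeasures P C | Integrable (fun ω => Φ ((Q.rnDeriv P ω).toReal)) P}

/-- `C_Φ`: the random variables lying, for every `Q ∈ M_Φ`, in the `L¹(Q)`-norm closure
of `C`. -/
def CPhi (P : Measure Ω) (C : Set (Ω → ℝ)) (Φ : ℝ → ℝ) : Set (Ω → ℝ) :=
  {f | ∀ Q ∈ MPhi P C Φ, Integrable f Q ∧
    ∀ ε : ℝ, 0 < ε → ∃ g ∈ C, ∫ ω, |f ω - g ω| ∂Q < ε}

open Set Topology
open scoped ENNReal

section L1Dual

variable {E : Type*} [NormedAddCommGroup E] [NormedSpace ℝ E]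

noncomputable def MeasureTheory.Lp.inclusion (μ : Measure Ω) [IsProbabilityMeasure μ]
    {p q : ℝ≥0∞} [Fact (1 ≤ p)] [Fact (1 ≤ q)] (hpq : p ≤ q) : Lp E q μ →L[ℝ] Lp E p μ :=
  LinearMap.mkContinuous
    { toFun := fun f => ((Lp.memLp f).mono_exponent hpq).toLp f
      map_add' := fun f g => by
        rw [← MemLp.toLp_add]
        exact MemLp.toLp_congr _ _ (Lp.coeFn_add f g)
      map_smul' := fun c f => by
        rw [RingHom.id_apply, ← MemLp.toLp_const_smul]
        exact MemLp.toLp_congr _ _ (Lp.coeFn_smul c f) }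
    1 fun f => by
      show ‖((Lp.memLp f).mono_exponent hpq).toLp f‖ ≤ 1 * ‖f‖
      rw [one_mul, Lp.norm_toLp, Lp.norm_def]
      exact ENNReal.toReal_mono (Lp.eLpNorm_ne_top f)
        (eLpNorm_le_eLpNorm_of_exponent_le hpq (Lp.aestronglyMeasurable f))

lemma MeasureTheory.Lp.coeFn_inclusion (μ : Measure Ω) [IsProbabilityMeasure μ]
    {p q : ℝ≥0∞} [Fact (1 ≤ p)] [Fact (1 ≤ q)] (hpq : p ≤ q) (f : Lp E q μ) :
    Lp.inclusion μ hpq f =ᵐ[μ] f :=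
  ((Lp.memLp f).mono_exponent hpq).coeFn_toLp

lemma ae_abs_le_of_abs_setIntegral_le {μ : Measure Ω} [IsFiniteMeasure μ] {g : Ω → ℝ}
    (hg : Integrable g μ) {M : ℝ}
    (hM : ∀ s, MeasurableSet s → |∫ ω in s, g ω ∂μ| ≤ M * μ.real s) :
    ∀ᵐ ω ∂μ, |g ω| ≤ M := by
  have hup : g ≤ᵐ[μ] fun _ => M :=
    ae_le_of_forall_setIntegral_le hg (integrable_const M) fun s hs _ => by
      rw [setIntegral_const, smul_eq_mul, mul_comm]
      exact (abs_le.mp (hM s hs)).2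
  have hlow : (fun _ => -M) ≤ᵐ[μ] g :=
    ae_le_of_forall_setIntegral_le (integrable_const (-M)) hg fun s hs _ => by
      rw [setIntegral_const, smul_eq_mul, mul_comm, neg_mul]
      exact (abs_le.mp (hM s hs)).1
  filter_upwards [hup, hlow] with ω h₁ h₂
  exact abs_le.mpr ⟨h₂, h₁⟩

theorem MeasureTheory.L1.exists_bounded_repr_of_dual (Q : Measure Ω) [IsProbabilityMeasure Q]
    (φ : Lp ℝ 1 Q →L[ℝ] ℝ) :
    ∃ h : Ω → ℝ, Measurable h ∧ (∀ ω, |h ω| ≤ ‖φ‖) ∧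
      ∀ u : Lp ℝ 1 Q, φ u = ∫ ω, h ω * u ω ∂Q := by
  -- Represent `φ` on `L² ⊆ L¹` by Riesz; testing on indicators bounds the representative by `‖φ‖`,
  -- and `L¹`-density of simple functions extends the representation.
  set H : Lp ℝ 2 Q := (InnerProductSpace.toDual ℝ _).symm (φ.comp (Lp.inclusion Q one_le_two))
  have hind : ∀ s (hs : MeasurableSet s) (c : ℝ),
      φ (indicatorConstLp 1 hs (measure_ne_top Q s) c) = ∫ ω in s, c * H ω ∂Q := by
    intro s hs c
    have hincl : Lp.inclusion Q one_le_two (indicatorConstLp 2 hs (measure_ne_top Q s) c) =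
        indicatorConstLp 1 hs (measure_ne_top Q s) c :=
      Lp.ext ((Lp.coeFn_inclusion Q _ _).trans
        (indicatorConstLp_coeFn.trans indicatorConstLp_coeFn.symm))
    rw [← hincl, ← ContinuousLinearMap.comp_apply, ← InnerProductSpace.toDual_symm_apply,
      real_inner_comm, L2.inner_indicatorConstLp_eq_setIntegral_inner]
    simp [H, mul_comm]
  have hbound : ∀ᵐ ω ∂Q, |H ω| ≤ ‖φ‖ := by
    refine ae_abs_le_of_abs_setIntegral_le ((Lp.memLp H).integrable one_le_two) fun s hs => ?_
    calc |∫ ω in s, H ω ∂Q| = ‖φ (indicatorConstLp 1 hs (measure_ne_top Q s) 1)‖ := by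
          simp [hind]
      _ ≤ ‖φ‖ * ‖indicatorConstLp 1 hs (measure_ne_top Q s) (1 : ℝ)‖ := φ.le_opNorm _
      _ = ‖φ‖ * Q.real s := by rw [norm_indicatorConstLp one_ne_zero ENNReal.one_ne_top]; simp
  set h : Ω → ℝ := fun ω => max (-‖φ‖) (min (H ω) ‖φ‖)
  have hH : h =ᵐ[Q] H := by
    filter_upwards [hbound] with ω hω
    rw [abs_le] at hω
    simp only [h, min_eq_left hω.2, max_eq_right hω.1]
  have hhbound : ∀ ω, |h ω| ≤ ‖φ‖ := fun ω =>
    abs_le.mpr ⟨le_max_left _ _, max_le (by linarith [norm_nonneg φ]) (min_le_right _ _)⟩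
  have hmeas : Measurable h :=
    measurable_const.max ((Lp.stronglyMeasurable H).measurable.min measurable_const)
  refine ⟨h, hmeas, hhbound, ?_⟩
  have hmem : MemLp h ⊤ Q :=
    memLp_top_of_bound hmeas.aestronglyMeasurable _ (Eventually.of_forall hhbound)
  set χ := (ContinuousLinearMap.mul ℝ ℝ).lpPairing Q ⊤ 1 (hmem.toLp h)
  have hχ : ∀ u, χ u = ∫ ω, h ω * u ω ∂Q := fun u => by
    rw [ContinuousLinearMap.lpPairing_eq_integral]
    refine integral_congr_ae ?_
    filter_upwards [hmem.coeFn_toLp] with ω hω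
    simp [hω]
  suffices φ = χ by intro u; rw [this, hχ]
  ext u
  refine Lp.induction ENNReal.one_ne_top (motive := fun u => φ u = χ u) ?_ ?_
    (isClosed_eq φ.continuous χ.continuous) u
  · intro c s hs _
    rw [Lp.simpleFunc.coe_indicatorConst, hind, hχ, ← integral_indicator hs]
    refine integral_congr_ae ?_
    filter_upwards [hH, indicatorConstLp_coeFn (p := 1) (hs := hs)
      (hμs := measure_ne_top Q s) (c := c)] with ω hω hω'
    by_cases hωs : ω ∈ s <;> simp [hω', hωs, hω, mul_comm]
  · intro f g _ _ _ hf hg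
    simp only [map_add, hf, hg]

end L1Dual

section ConvexFunction

lemma ConvexOn.add_rightDeriv_mul_sub_le {S : Set ℝ} {f : ℝ → ℝ} (hf : ConvexOn ℝ S f)
    {x y : ℝ} (hx : x ∈ interior S) (hy : y ∈ S) :
    f x + derivWithin f (Ioi x) x * (y - x) ≤ f y := by
  rcases lt_trichotomy y x with hyx | rfl | hxy
  · have h := (hf.slope_le_leftDeriv_of_mem_interior hy hx hyx).trans
      (hf.leftDeriv_le_rightDeriv_of_mem_interior hx)
    rw [slope_def_field, div_le_iff₀ (sub_pos.mpr hyx)] at h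
    linarith
  · simp
  · have h := hf.rightDeriv_le_slope_of_mem_interior hx hy hxy
    rw [slope_def_field, le_div_iff₀ (sub_pos.mpr hxy)] at h
    linarith

variable {Φ : ℝ → ℝ}

lemma ConvexOn.add_rightDeriv_mul_sub_le_of_nonneg (hΦ : ConvexOn ℝ (Ioi 0) Φ)
    (hΦ0 : Tendsto Φ (𝓝[>] 0) (𝓝 (Φ 0))) {z : ℝ} (hz : 0 ≤ z) :
    Φ 1 + derivWithin Φ (Ioi 1) 1 * (z - 1) ≤ Φ z := by
  have h1 : (1 : ℝ) ∈ interior (Ioi 0) := by simp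
  rcases hz.eq_or_lt with rfl | hz
  · have hline : Tendsto (fun t => Φ 1 + derivWithin Φ (Ioi 1) 1 * (t - 1)) (𝓝[>] 0)
        (𝓝 (Φ 1 + derivWithin Φ (Ioi 1) 1 * (0 - 1))) :=
      (Continuous.tendsto (by fun_prop) 0).mono_left nhdsWithin_le_nhds
    refine le_of_tendsto_of_tendsto hline hΦ0 ?_
    filter_upwards [self_mem_nhdsWithin] with t ht using hΦ.add_rightDeriv_mul_sub_le h1 ht
  · exact hΦ.add_rightDeriv_mul_sub_le h1 hz

lemma ConvexOn.le_max_of_mem_Icc_zero (hΦ : ConvexOn ℝ (Ioi 0) Φ)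
    (hΦ0 : Tendsto Φ (𝓝[>] 0) (𝓝 (Φ 0))) {y z : ℝ} (hz : z ∈ Icc 0 y) :
    Φ z ≤ max (Φ 0) (Φ y) := by
  rcases hz.1.eq_or_lt with rfl | hz0
  · exact le_max_left _ _
  refine ge_of_tendsto (hΦ0.max tendsto_const_nhds) ?_
  filter_upwards [Ioo_mem_nhdsGT hz0] with t ht
  exact hΦ.le_max_of_mem_Icc ht.1 (hz0.trans_le hz.2) ⟨ht.2.le, hz.2⟩

lemma ContinuousOn.measurable_comp_of_nonneg (hΦ : ContinuousOn Φ (Ioi 0)) {z : Ω → ℝ}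
    (hz : Measurable z) (hz0 : ∀ ω, 0 ≤ z ω) : Measurable fun ω => Φ (z ω) := by
  classical
  have heq : (fun ω => Φ (z ω)) = fun ω => (Ioi 0).piecewise Φ (fun _ => Φ 0) (z ω) := by
    funext ω
    rcases (hz0 ω).eq_or_lt with h | h
    · simp [← h]
    · simp [h]
  rw [heq]
  exact (hΦ.measurable_piecewise continuousOn_const measurableSet_Ioi).comp hz

/-- The growth condition `G(Φ)`. -/
def GrowthCondition (Φ : ℝ → ℝ) : Prop :=
  ∀ l₀ l₁ : ℝ, 0 < l₀ → l₀ ≤ l₁ → ∃ a : ℝ, 0 < a ∧ ∃ b : ℝ, 0 < b ∧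
    ∀ y : ℝ, 0 < y → ∀ l ∈ Set.Icc l₀ l₁, max (Φ (l * y)) 0 ≤ a * max (Φ y) 0 + b * (y + 1)

lemma comp_mul_le_of_growth (hΦ : ConvexOn ℝ (Ioi 0) Φ)
    (hΦ0 : Tendsto Φ (𝓝[>] 0) (𝓝 (Φ 0))) {a b L : ℝ} (ha : 0 ≤ a) (hb : 0 ≤ b)
    (hab : ∀ y, 0 < y → ∀ l ∈ Icc 1 L, max (Φ (l * y)) 0 ≤ a * max (Φ y) 0 + b * (y + 1))
    {l y : ℝ} (hl : l ∈ Icc 0 L) (hy : 0 ≤ y) :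
    Φ (l * y) ≤ |Φ 0| + (1 + a) * |Φ y| + b * (y + 1) := by
  have hrest : 0 ≤ a * |Φ y| + b * (y + 1) := by positivity
  have hmax : max (Φ y) 0 ≤ |Φ y| := max_le (le_abs_self _) (abs_nonneg _)
  rcases le_total l 1 with hl1 | hl1
  · calc Φ (l * y) ≤ max (Φ 0) (Φ y) :=
          hΦ.le_max_of_mem_Icc_zero hΦ0 ⟨mul_nonneg hl.1 hy, mul_le_of_le_one_left hy hl1⟩
      _ ≤ |Φ 0| + |Φ y| := max_le (by linarith [le_abs_self (Φ 0), abs_nonneg (Φ y)])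
          (by linarith [le_abs_self (Φ y), abs_nonneg (Φ 0)])
      _ ≤ |Φ 0| + (1 + a) * |Φ y| + b * (y + 1) := by linarith
  rcases hy.eq_or_lt with rfl | hy
  · rw [mul_zero]
    linarith [le_abs_self (Φ 0), abs_nonneg (Φ 0)]
  calc Φ (l * y) ≤ max (Φ (l * y)) 0 := le_max_left _ _
    _ ≤ a * max (Φ y) 0 + b * (y + 1) := hab y hy l ⟨hl1, hl.2⟩
    _ ≤ a * |Φ y| + b * (y + 1) := by gcongr
    _ ≤ |Φ 0| + (1 + a) * |Φ y| + b * (y + 1) := by linarith [abs_nonneg (Φ 0), abs_nonneg (Φ y)]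

lemma abs_comp_mul_le_of_growth (hΦ : ConvexOn ℝ (Ioi 0) Φ)
    (hΦ0 : Tendsto Φ (𝓝[>] 0) (𝓝 (Φ 0))) {a b L : ℝ} (ha : 0 ≤ a) (hb : 0 ≤ b)
    (hab : ∀ y, 0 < y → ∀ l ∈ Icc 1 L, max (Φ (l * y)) 0 ≤ a * max (Φ y) 0 + b * (y + 1))
    {l y : ℝ} (hl : l ∈ Icc 0 L) (hy : 0 ≤ y) :
    |Φ (l * y)| ≤ |Φ 0| + |Φ 1| + (1 + a) * |Φ y| + b * (y + 1) +
      |derivWithin Φ (Ioi 1) 1| * (L * y + 1) := by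
  set d := derivWithin Φ (Ioi 1) 1
  have hly : 0 ≤ l * y := mul_nonneg hl.1 hy
  have hslope : |d * (l * y - 1)| ≤ |d| * (L * y + 1) := by
    rw [abs_mul]
    gcongr
    calc |l * y - 1| ≤ l * y + 1 := abs_sub_le_iff.mpr ⟨by linarith, by linarith⟩
      _ ≤ L * y + 1 := by gcongr; exact hl.2
  have hlow := hΦ.add_rightDeriv_mul_sub_le_of_nonneg hΦ0 hly
  have hup := comp_mul_le_of_growth hΦ hΦ0 ha hb hab hl hy
  rw [abs_le]
  constructor
  · linarith [neg_abs_le (d * (l * y - 1)), neg_abs_le (Φ 1), abs_nonneg (Φ 0),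
      abs_nonneg (Φ y), mul_nonneg (by linarith : (0:ℝ) ≤ 1 + a) (abs_nonneg (Φ y)),
      mul_nonneg hb (by linarith : (0:ℝ) ≤ y + 1)]
  · linarith [abs_nonneg (Φ 1), abs_nonneg (d * (l * y - 1))]

lemma integrable_comp_mul_of_growth {P : Measure Ω} [IsFiniteMeasure P]
    (hΦ : ConvexOn ℝ (Ioi 0) Φ) (hΦgrowth : GrowthCondition Φ)
    (hΦ0 : Tendsto Φ (𝓝[>] 0) (𝓝 (Φ 0))) {y l : Ω → ℝ} {L : ℝ} (hy : Measurable y)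
    (hy0 : ∀ ω, 0 ≤ y ω) (hyint : Integrable y P) (hΦy : Integrable (fun ω => Φ (y ω)) P)
    (hl : Measurable l) (hlL : ∀ ω, l ω ∈ Icc 0 L) :
    Integrable (fun ω => Φ (l ω * y ω)) P := by
  obtain ⟨a, ha, b, hb, hab⟩ := hΦgrowth 1 (max L 1) one_pos (le_max_right _ _)
  have hdom : Integrable (fun ω => |Φ 0| + |Φ 1| + (1 + a) * |Φ (y ω)| + b * (y ω + 1) +
      |derivWithin Φ (Ioi 1) 1| * (max L 1 * y ω + 1)) P := by
    have := hΦy.abs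
    fun_prop
  refine hdom.mono' ((hΦ.continuousOn isOpen_Ioi).measurable_comp_of_nonneg (hl.mul hy)
    fun ω => mul_nonneg (hlL ω).1 (hy0 ω)).aestronglyMeasurable (Eventually.of_forall fun ω => ?_)
  rw [Real.norm_eq_abs]
  exact abs_comp_mul_le_of_growth hΦ hΦ0 ha.le hb.le hab
    ⟨(hlL ω).1, (hlL ω).2.trans (le_max_left _ _)⟩ (hy0 ω)

end ConvexFunction

section Reweight

noncomputable def reweight (Q : Measure Ω) (h : Ω → ℝ) : Measure Ω :=
  Q.withDensity fun ω => ENNReal.ofReal (h ω / ∫ ω', h ω' ∂Q)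

variable {Q : Measure Ω} {h : Ω → ℝ}

lemma integral_reweight (hh : Measurable h) (h0 : ∀ ω, 0 ≤ h ω) (w : Ω → ℝ) :
    ∫ ω, w ω ∂reweight Q h = (∫ ω, h ω * w ω ∂Q) / ∫ ω, h ω ∂Q := by
  have hc : 0 ≤ ∫ ω, h ω ∂Q := integral_nonneg h0
  rw [reweight, integral_withDensity_eq_integral_toReal_smul₀
    (hh.div_const _).ennreal_ofReal.aemeasurable
    (Eventually.of_forall fun _ => ENNReal.ofReal_lt_top), ← integral_div]
  refine integral_congr_ae (Eventually.of_forall fun ω => ?_)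
  simp only [ENNReal.toReal_ofReal (div_nonneg (h0 ω) hc), smul_eq_mul]
  ring

lemma isProbabilityMeasure_reweight (hint : Integrable h Q) (h0 : ∀ ω, 0 ≤ h ω)
    (hpos : 0 < ∫ ω, h ω ∂Q) : IsProbabilityMeasure (reweight Q h) := by
  constructor
  rw [reweight, withDensity_apply _ MeasurableSet.univ, Measure.restrict_univ,
    ← ofReal_integral_eq_lintegral_ofReal (hint.div_const _)
      (Eventually.of_forall fun ω => div_nonneg (h0 ω) hpos.le),
    integral_div, div_self hpos.ne', ENNReal.ofReal_one]

lemma rnDeriv_reweight {P : Measure Ω} [SigmaFinite P] [SigmaFinite Q] (hh : Measurable h) :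
    (reweight Q h).rnDeriv P =ᵐ[P]
      fun ω => ENNReal.ofReal (h ω / ∫ ω', h ω' ∂Q) * Q.rnDeriv P ω :=
  Measure.rnDeriv_withDensity_left (hh.div_const _).ennreal_ofReal.aemeasurable
    (Eventually.of_forall fun _ => ENNReal.ofReal_ne_top)

variable {Φ : ℝ → ℝ}

lemma reweight_mem_MPhi {P : Measure Ω} [IsFiniteMeasure P] {C : Set (Ω → ℝ)}
    (hΦ : ConvexOn ℝ (Ioi 0) Φ) (hΦgrowth : GrowthCondition Φ)
    (hΦ0 : Tendsto Φ (𝓝[>] 0) (𝓝 (Φ 0))) (hQ : Q ∈ MPhi P C Φ) {M : ℝ} (hh : Measurable h)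
    (h0 : ∀ ω, 0 ≤ h ω) (hM : ∀ ω, h ω ≤ M) (hpos : 0 < ∫ ω, h ω ∂Q)
    (hC : ∀ g ∈ C, ∫ ω, h ω * g ω ∂Q ≤ 0) : reweight Q h ∈ MPhi P C Φ := by
  obtain ⟨⟨hQprob, hQP, -⟩, hQΦ⟩ := hQ
  have hint : Integrable h Q := Integrable.of_bound hh.aestronglyMeasurable M
    (Eventually.of_forall fun ω => by rw [Real.norm_eq_abs, abs_of_nonneg (h0 ω)]; exact hM ω)
  refine ⟨⟨isProbabilityMeasure_reweight hint h0 hpos,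
    (withDensity_absolutelyContinuous _ _).trans hQP, fun g hg => ?_⟩, ?_⟩
  · rw [integral_reweight hh h0]
    exact div_nonpos_of_nonpos_of_nonneg (hC g hg) hpos.le
  · have hl : ∀ ω, h ω / ∫ ω', h ω' ∂Q ∈ Icc 0 (M / ∫ ω', h ω' ∂Q) := fun ω =>
      ⟨div_nonneg (h0 ω) hpos.le, div_le_div_of_nonneg_right (hM ω) hpos.le⟩
    refine (integrable_comp_mul_of_growth hΦ hΦgrowth hΦ0
      (Measure.measurable_rnDeriv Q P).ennreal_toReal (fun _ => ENNReal.toReal_nonneg)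
      (Measure.integrable_toReal_rnDeriv (μ := Q) (ν := P)) hQΦ (hh.div_const _) hl).congr ?_
    filter_upwards [rnDeriv_reweight (P := P) (Q := Q) hh] with ω hω
    rw [hω, ENNReal.toReal_mul, ENNReal.toReal_ofReal (hl ω).1]

end Reweight

section Separation

lemma MeasureTheory.MemLp.top_of_absolutelyContinuous {P Q : Measure Ω} {g : Ω → ℝ}
    (hg : MemLp g ⊤ P) (hQP : Q ≪ P) : MemLp g ⊤ Q := by
  refine ⟨hg.1.mono_ac hQP, ?_⟩
  rw [eLpNorm_exponent_top]
  exact (eLpNormEssSup_mono_measure g hQP).trans_lt (by simpa [eLpNorm_exponent_top] using hg.2)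

variable {P Q : Measure Ω} {C : Set (Ω → ℝ)}

noncomputable def l1Cone (Q : Measure Ω) (C : Set (Ω → ℝ))
    (hCcone : ∀ f ∈ C, ∀ g ∈ C, ∀ a b : ℝ, 0 ≤ a → 0 ≤ b → (fun ω => a * f ω + b * g ω) ∈ C)
    (hC0 : (fun _ => (0 : ℝ)) ∈ C) : PointedCone ℝ (Lp ℝ 1 Q) where
  carrier := {u | ∃ g ∈ C, u =ᵐ[Q] g}
  add_mem' := by
    rintro u v ⟨g₁, hg₁, hu⟩ ⟨g₂, hg₂, hv⟩
    refine ⟨_, hCcone g₁ hg₁ g₂ hg₂ 1 1 zero_le_one zero_le_one, ?_⟩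
    filter_upwards [Lp.coeFn_add u v, hu, hv] with ω h h₁ h₂
    refine h.trans ?_
    simp [h₁, h₂]
  zero_mem' := ⟨_, hC0, Lp.coeFn_zero _ _ _⟩
  smul_mem' := by
    rintro ⟨t, ht⟩ u ⟨g, hg, hu⟩
    refine ⟨_, hCcone g hg g hg t 0 ht le_rfl, ?_⟩
    filter_upwards [Lp.coeFn_smul t u, hu] with ω h h₁
    simp [Nonneg.mk_smul, h, h₁]

lemma exists_separating_bounded_function [IsProbabilityMeasure Q] (hQP : Q ≪ P)
    (hCbdd : ∀ g ∈ C, MemLp g ⊤ P)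
    (hCcone : ∀ f ∈ C, ∀ g ∈ C, ∀ a b : ℝ, 0 ≤ a → 0 ≤ b → (fun ω => a * f ω + b * g ω) ∈ C)
    (hC0 : (fun _ => (0 : ℝ)) ∈ C) {F : Ω → ℝ} (hF : Integrable F Q) {ε : ℝ} (hε : 0 < ε)
    (hfar : ∀ g ∈ C, ε ≤ ∫ ω, |F ω - g ω| ∂Q) :
    ∃ h : Ω → ℝ, Measurable h ∧ (∃ M, ∀ ω, |h ω| ≤ M) ∧
      (∀ g ∈ C, ∫ ω, h ω * g ω ∂Q ≤ 0) ∧ 0 < ∫ ω, h ω * F ω ∂Q := by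
  set K := l1Cone Q C hCcone hC0
  have hCint : ∀ g ∈ C, Integrable g Q := fun g hg =>
    ((hCbdd g hg).top_of_absolutelyContinuous hQP).integrable le_top
  have hFK : hF.toL1 F ∉ Submodule.closure K := by
    intro hmem
    obtain ⟨u, ⟨g, hg, hug⟩, hdist⟩ := Metric.mem_closure_iff.mp hmem ε hε
    refine (hfar g hg).not_gt ?_
    rwa [L1.dist_eq_integral_dist, integral_congr_ae ?_] at hdist
    filter_upwards [hF.coeFn_toL1, hug] with ω h₁ h₂
    rw [h₁, h₂, Real.dist_eq]
  obtain ⟨φ, hφK, hφF⟩ := ProperCone.hyperplane_separation_point (Submodule.closure K) hFK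
  obtain ⟨h, hmeas, hbound, hrepr⟩ := L1.exists_bounded_repr_of_dual Q φ
  have hφ : ∀ {w : Ω → ℝ} (hw : Integrable w Q), φ (hw.toL1 w) = -∫ ω, -h ω * w ω ∂Q :=
    fun hw => by
      rw [hrepr, ← integral_neg]
      refine integral_congr_ae ?_
      filter_upwards [hw.coeFn_toL1] with ω hω
      rw [hω]
      ring
  refine ⟨fun ω => -h ω, hmeas.neg, ⟨‖φ‖, fun ω => by simpa using hbound ω⟩, fun g hg => ?_, ?_⟩
  · have := hφK _ (subset_closure ⟨g, hg, (hCint g hg).coeFn_toL1⟩)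
    rw [hφ (hCint g hg)] at this
    linarith
  · rw [hφ hF] at hφF
    linarith

lemma integral_pos_of_integral_mul_pos {h w : Ω → ℝ} (h0 : ∀ ω, 0 ≤ h ω)
    (hint : Integrable h Q) (hpos : 0 < ∫ ω, h ω * w ω ∂Q) : 0 < ∫ ω, h ω ∂Q := by
  refine (integral_nonneg h0).lt_of_ne fun hzero => hpos.ne' ?_
  have hh : h =ᵐ[Q] 0 := (integral_eq_zero_iff_of_nonneg h0 hint).mp hzero.symm
  rw [← integral_zero Ω ℝ]
  exact integral_congr_ae (by filter_upwards [hh] with ω hω; simp [hω])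

lemma ae_nonneg_of_forall_integral_mul_nonpos {h : Ω → ℝ} (hint : Integrable h Q)
    (hCneg : ∀ f : Ω → ℝ, MemLp f ⊤ P → (∀ᵐ ω ∂P, f ω ≤ 0) → f ∈ C)
    (hC : ∀ g ∈ C, ∫ ω, h ω * g ω ∂Q ≤ 0) : 0 ≤ᵐ[Q] h := by
  refine ae_nonneg_of_forall_setIntegral_nonneg hint fun s hs _ => ?_
  have hbdd : ∀ ω, ‖s.indicator (fun _ => (-1 : ℝ)) ω‖ ≤ 1 := fun ω => by
    by_cases hω : ω ∈ s <;> simp [hω]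
  have hsC : s.indicator (fun _ => (-1 : ℝ)) ∈ C :=
    hCneg _ (memLp_top_of_bound (measurable_const.indicator hs).aestronglyMeasurable 1
      (Eventually.of_forall hbdd))
      (Eventually.of_forall fun ω => by by_cases hω : ω ∈ s <;> simp [hω])
  have hmul : ∫ ω, h ω * s.indicator (fun _ => (-1 : ℝ)) ω ∂Q = -∫ ω in s, h ω ∂Q := by
    simp_rw [← Set.indicator_mul_right, integral_indicator hs, mul_neg_one, integral_neg]
  linarith [hC _ hsC]

lemma exists_separating_density [IsProbabilityMeasure Q] (hQP : Q ≪ P)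
    (hCbdd : ∀ g ∈ C, MemLp g ⊤ P)
    (hCcone : ∀ f ∈ C, ∀ g ∈ C, ∀ a b : ℝ, 0 ≤ a → 0 ≤ b → (fun ω => a * f ω + b * g ω) ∈ C)
    (hCneg : ∀ f : Ω → ℝ, MemLp f ⊤ P → (∀ᵐ ω ∂P, f ω ≤ 0) → f ∈ C)
    {F : Ω → ℝ} (hF : Integrable F Q) {ε : ℝ} (hε : 0 < ε)
    (hfar : ∀ g ∈ C, ε ≤ ∫ ω, |F ω - g ω| ∂Q) :
    ∃ h : Ω → ℝ, Measurable h ∧ (∀ ω, 0 ≤ h ω) ∧ (∃ M, ∀ ω, h ω ≤ M) ∧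
      (∀ g ∈ C, ∫ ω, h ω * g ω ∂Q ≤ 0) ∧ 0 < ∫ ω, h ω * F ω ∂Q ∧ 0 < ∫ ω, h ω ∂Q := by
  have hC0 : (fun _ => (0 : ℝ)) ∈ C :=
    hCneg _ (memLp_top_const 0) (Eventually.of_forall fun _ => le_rfl)
  obtain ⟨h, hmeas, ⟨M, hM⟩, hC, hhF⟩ :=
    exists_separating_bounded_function hQP hCbdd hCcone hC0 hF hε hfar
  have hint : Integrable h Q := Integrable.of_bound hmeas.aestronglyMeasurable M
    (Eventually.of_forall hM)
  have hpos : (fun ω => max (h ω) 0) =ᵐ[Q] h := by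
    filter_upwards [ae_nonneg_of_forall_integral_mul_nonpos hint hCneg hC] with ω hω
    exact max_eq_left hω
  have hmul : ∀ w : Ω → ℝ, ∫ ω, max (h ω) 0 * w ω ∂Q = ∫ ω, h ω * w ω ∂Q := fun w =>
    integral_congr_ae (hpos.mul (EventuallyEq.refl _ w))
  have hF' : 0 < ∫ ω, max (h ω) 0 * F ω ∂Q := (hmul F).symm ▸ hhF
  refine ⟨fun ω => max (h ω) 0, hmeas.max measurable_const, fun ω => le_max_right _ _,
    ⟨M, fun ω => max_le ((le_abs_self _).trans (hM ω)) ((abs_nonneg _).trans (hM ω))⟩,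
    fun g hg => (hmul g).trans_le (hC g hg), hF',
    integral_pos_of_integral_mul_pos (fun ω => le_max_right _ _) (hint.congr hpos.symm) hF'⟩

end Separation

section Duality

variable {P : Measure Ω} {C : Set (Ω → ℝ)} {Φ : ℝ → ℝ} {f : Ω → ℝ} {x : ℝ}

lemma integral_sub_const {Q : Measure Ω} [IsProbabilityMeasure Q] (hf : Integrable f Q) (x : ℝ) :
    ∫ ω, (f ω - x) ∂Q = ∫ ω, f ω ∂Q - x := by
  rw [integral_sub hf (integrable_const x), integral_const, probReal_univ, one_smul]

lemma integral_le_of_sub_mem_CPhi (hCbdd : ∀ g ∈ C, MemLp g ⊤ P)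
    (hfx : (fun ω => f ω - x) ∈ CPhi P C Φ) {Q : Measure Ω} (hQ : Q ∈ MPhi P C Φ) :
    ∫ ω, f ω ∂Q ≤ x := by
  obtain ⟨hF, happrox⟩ := hfx Q hQ
  obtain ⟨⟨hQprob, hQP, hQsep⟩, -⟩ := hQ
  have hf : Integrable f Q :=
    (hF.add (integrable_const x)).congr (Eventually.of_forall fun ω => by simp)
  suffices ∫ ω, (f ω - x) ∂Q ≤ 0 by rwa [integral_sub_const hf, sub_nonpos] at this
  refine le_of_forall_pos_lt_add fun ε hε => ?_
  obtain ⟨g, hg, hclose⟩ := happrox ε hε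
  have hgint : Integrable g Q := ((hCbdd g hg).top_of_absolutelyContinuous hQP).integrable le_top
  have hdiff : ∫ ω, (f ω - x) ∂Q - ∫ ω, g ω ∂Q ≤ ∫ ω, |f ω - x - g ω| ∂Q := by
    rw [← integral_sub hF hgint]
    exact integral_mono (hF.sub hgint) (hF.sub hgint).abs fun ω => le_abs_self _
  linarith [hQsep g hg]

lemma sub_mem_CPhi_of_forall_integral_lt [IsFiniteMeasure P]
    (hCbdd : ∀ g ∈ C, MemLp g ⊤ P)
    (hCcone : ∀ f ∈ C, ∀ g ∈ C, ∀ a b : ℝ, 0 ≤ a → 0 ≤ b → (fun ω => a * f ω + b * g ω) ∈ C)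
    (hCneg : ∀ f : Ω → ℝ, MemLp f ⊤ P → (∀ᵐ ω ∂P, f ω ≤ 0) → f ∈ C)
    (hΦ : ConvexOn ℝ (Ioi 0) Φ) (hΦgrowth : GrowthCondition Φ)
    (hΦ0 : Tendsto Φ (𝓝[>] 0) (𝓝 (Φ 0))) (hf : ∀ Q ∈ MPhi P C Φ, Integrable f Q)
    (hlt : ∀ Q ∈ MPhi P C Φ, ∫ ω, f ω ∂Q < x) :
    (fun ω => f ω - x) ∈ CPhi P C Φ := by
  intro Q hQ
  have := hQ.1.1
  have hF : Integrable (fun ω => f ω - x) Q := (hf Q hQ).sub (integrable_const x)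
  refine ⟨hF, fun ε hε => ?_⟩
  by_contra! hfar
  obtain ⟨h, hmeas, h0, ⟨M, hM⟩, hC, hhF, hpos⟩ :=
    exists_separating_density hQ.1.2.1 hCbdd hCcone hCneg hF hε hfar
  have hmem := reweight_mem_MPhi hΦ hΦgrowth hΦ0 hQ hmeas h0 hM hpos hC
  have := hmem.1.1
  have hgain : 0 < ∫ ω, (f ω - x) ∂reweight Q h := by
    rw [integral_reweight hmeas h0]
    exact div_pos hhF hpos
  rw [integral_sub_const (hf _ hmem)] at hgain
  linarith [hlt _ hmem]

end Duality

theorem weak_superreplication_duality_general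
    (P : Measure Ω) [IsProbabilityMeasure P]
    (C : Set (Ω → ℝ))
    (hCbdd : ∀ g ∈ C, MemLp g ⊤ P)
    (hCcone : ∀ f ∈ C, ∀ g ∈ C, ∀ a b : ℝ, 0 ≤ a → 0 ≤ b →
      (fun ω => a * f ω + b * g ω) ∈ C)
    (hCneg : ∀ f : Ω → ℝ, MemLp f ⊤ P → (∀ᵐ ω ∂P, f ω ≤ 0) → f ∈ C)
    (Φ : ℝ → ℝ)
    (hΦconv : ConvexOn ℝ (Set.Ioi 0) Φ)
    (hΦgrowth : ∀ l₀ l₁ : ℝ, 0 < l₀ → l₀ ≤ l₁ → ∃ a : ℝ, 0 < a ∧ ∃ b : ℝ, 0 < b ∧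
      ∀ y : ℝ, 0 < y → ∀ l ∈ Set.Icc l₀ l₁,
        max (Φ (l * y)) 0 ≤ a * max (Φ y) 0 + b * (y + 1))
    (hΦ0 : Tendsto Φ (nhdsWithin 0 (Set.Ioi 0)) (nhds (Φ 0)))
    (f : Ω → ℝ) (hf : ∀ Q ∈ MPhi P C Φ, Integrable f Q) :
    sInf ((fun x : ℝ => (x : EReal)) '' {x : ℝ | (fun ω => f ω - x) ∈ CPhi P C Φ}) =
      sSup ((fun Q : Measure Ω => ((∫ ω, f ω ∂Q : ℝ) : EReal)) '' MPhi P C Φ) := by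
  refine le_antisymm (le_of_forall_gt_imp_ge_of_dense fun e he => ?_) ?_
  · obtain ⟨x, hsup, hxe⟩ := EReal.exists_between_coe_real he
    have hlt : ∀ Q ∈ MPhi P C Φ, ∫ ω, f ω ∂Q < x := fun Q hQ =>
      EReal.coe_lt_coe_iff.mp ((le_sSup (mem_image_of_mem _ hQ)).trans_lt hsup)
    have hx : x ∈ {x : ℝ | (fun ω => f ω - x) ∈ CPhi P C Φ} :=
      sub_mem_CPhi_of_forall_integral_lt hCbdd hCcone hCneg hΦconv hΦgrowth hΦ0 hf hlt
    exact (sInf_le (mem_image_of_mem _ hx)).trans hxe.le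
  · refine le_sInf ?_
    rintro _ ⟨x, hx, rfl⟩
    refine sSup_le ?_
    rintro _ ⟨Q, hQ, rfl⟩
    exact EReal.coe_le_coe_iff.mpr (integral_le_of_sub_mem_CPhi hCbdd hx hQ)

/-- Theorem 5 of Biagini–Frittelli (weak super replication duality): if `Φ(0) < +∞`,
`M_Φ` contains a measure equivalent to `P`, and `f ∈ L¹(Q)` for all `Q ∈ M_Φ`, then the
weak super replication price satisfies
`inf {x ∈ ℝ : f - x ∈ C_Φ} = sup {E_Q[f] : Q ∈ M_Φ}` in `ℝ ∪ {+∞}`. -/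
theorem weak_superreplication_duality
    (P : Measure Ω) [IsProbabilityMeasure P]
    (C : Set (Ω → ℝ))
    (hCbdd : ∀ g ∈ C, MemLp g ⊤ P)
    (hCcone : ∀ f ∈ C, ∀ g ∈ C, ∀ a b : ℝ, 0 ≤ a → 0 ≤ b →
      (fun ω => a * f ω + b * g ω) ∈ C)
    (hCneg : ∀ f : Ω → ℝ, MemLp f ⊤ P → (∀ᵐ ω ∂P, f ω ≤ 0) → f ∈ C)
    (Φ : ℝ → ℝ)
    (hΦconv : ConvexOn ℝ (Set.Ioi 0) Φ)
    (hΦgrowth : ∀ l₀ l₁ : ℝ, 0 < l₀ → l₀ ≤ l₁ → ∃ a : ℝ, 0 < a ∧ ∃ b : ℝ, 0 < b ∧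
      ∀ y : ℝ, 0 < y → ∀ l ∈ Set.Icc l₀ l₁,
        max (Φ (l * y)) 0 ≤ a * max (Φ y) 0 + b * (y + 1))
    (hΦ0 : Tendsto Φ (nhdsWithin 0 (Set.Ioi 0)) (nhds (Φ 0)))
    (hMPhiP : ∃ Q ∈ MPhi P C Φ, P ≪ Q)
    (f : Ω → ℝ) (hf : ∀ Q ∈ MPhi P C Φ, Integrable f Q) :
    sInf ((fun x : ℝ => (x : EReal)) '' {x : ℝ | (fun ω => f ω - x) ∈ CPhi P C Φ}) =
      sSup ((fun Q : Measure Ω => ((∫ ω, f ω ∂Q : ℝ) : EReal)) '' MPhi P C Φ) :=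
  weak_superreplication_duality_general P C hCbdd hCcone hCneg Φ hΦconv hΦgrowth hΦ0 f hf
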